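/- (Type C_n, part (i) of the proposition on fundamental weights.) Let n ≥ 2. For every j ∈ {1, …, n}, ℓ_{ϖ₁}⁻(ϖ_j) = 2n − j. In particular, the minimum over j ∈ {1, …, n} of ℓ_{ϖ₁}⁻(ϖ_j) equals n and is attained only at j = n, by the composition w = s₁ ∘ s₂ ∘ ⋯ ∘ s_n (with s_n applied first), which satisfies ⟨w ϖ_n, ϖ₁⟩ < 0. -/

import Mathlib

/-!
Read the signed coordinates of `v ∈ ℝⁿ` along the chain of positions `e₁, …, eₙ, -eₙ, …, -e₁`:
a positive entry in coordinate `i` (0-based) lies `2n - 1 - i` steps before `-e₁`, a negative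
one `i` steps. A simple reflection moves every entry by at most one step along this chain, so
the least such distance over the nonzero entries drops by at most one per reflection. For `ϖⱼ`
it is `2n - j`, while `⟨w v, ϖ₁⟩ < 0` makes it `0` for `w v`; hence `ℓ⁻ ≥ 2n - j`. Conversely
`s₁ ⋯ sₙ sₙ₋₁ ⋯ sⱼ` carries the last `1` of `ϖⱼ` along the chain to `-e₁`.
-/

open scoped RealInnerProductSpace

/-- The `j`-th simple reflection of type `Cₙ` (`1 ≤ j ≤ n`), acting on `ℝⁿ`:
for `j < n` it transposes the coordinates numbered `j` and `j+1` (in `1`-based numbering),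
and for `j = n` it negates the last coordinate. -/
noncomputable def sC (n j : ℕ) : EuclideanSpace ℝ (Fin n) → EuclideanSpace ℝ (Fin n) :=
  fun v => WithLp.toLp 2 fun i =>
    if j = n then (if (i : ℕ) + 1 = n then -(v i) else v i)
    else if (i : ℕ) + 1 = j then v ⟨j % n, Nat.mod_lt _ i.pos⟩
    else if (i : ℕ) = j then v ⟨(j - 1) % n, Nat.mod_lt _ i.pos⟩
    else v i

/-- The composition of the simple reflections indexed by the entries of `l`
(the last entry of the list is applied first). -/
noncomputable def compC (n : ℕ) (l : List ℕ) :
    EuclideanSpace ℝ (Fin n) → EuclideanSpace ℝ (Fin n) :=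
  l.foldr (fun j g => sC n j ∘ g) id

/-- The fundamental weight `ϖⱼ = e₁ + ⋯ + eⱼ` of type `Cₙ` (`1 ≤ j ≤ n`). -/
noncomputable def wtC (n j : ℕ) : EuclideanSpace ℝ (Fin n) :=
  WithLp.toLp 2 fun i => if (i : ℕ) < j then 1 else 0

section Reflections

variable {n : ℕ}

lemma sC_apply_of_lt {m : ℕ} (hm : 1 ≤ m) (hmn : m < n) (v : EuclideanSpace ℝ (Fin n))
    (i : Fin n) : sC n m v i = v (Equiv.swap ⟨m - 1, by omega⟩ ⟨m, hmn⟩ i) := by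
  have hm' : m ≠ n := hmn.ne
  simp only [sC, PiLp.toLp_apply, if_neg hm', Equiv.swap_apply_def, Fin.ext_iff,
    Nat.mod_eq_of_lt hmn, Nat.mod_eq_of_lt (show m - 1 < n by omega)]
  split_ifs <;> first | rfl | omega

lemma sC_self_apply (v : EuclideanSpace ℝ (Fin n)) (i : Fin n) :
    sC n n v i = if (i : ℕ) + 1 = n then -v i else v i := by
  simp [sC]

lemma compC_nil (v : EuclideanSpace ℝ (Fin n)) : compC n [] v = v := rfl

lemma compC_cons (m : ℕ) (l : List ℕ) (v : EuclideanSpace ℝ (Fin n)) :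
    compC n (m :: l) v = sC n m (compC n l v) := rfl

lemma compC_append (l₁ l₂ : List ℕ) (v : EuclideanSpace ℝ (Fin n)) :
    compC n (l₁ ++ l₂) v = compC n l₁ (compC n l₂ v) := by
  induction l₁ with
  | nil => rfl
  | cons m l ih => rw [List.cons_append, compC_cons, compC_cons, ih]

lemma inner_wtC_one (hn : 0 < n) (v : EuclideanSpace ℝ (Fin n)) :
    ⟪v, wtC n 1⟫ = v ⟨0, hn⟩ := by
  rw [PiLp.inner_apply, Finset.sum_eq_single ⟨0, hn⟩]
  · simp [wtC]
  · intro i _ hi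
    have : (i : ℕ) ≠ 0 := fun h => hi (Fin.ext h)
    simp [wtC, this]
  · simp

end Reflections

section LowerBound

variable {n : ℕ}

/-- A zero entry never becomes negative; its value `2n` exceeds every distance along the chain. -/
noncomputable def negDist (n : ℕ) (x : ℝ) (i : ℕ) : ℕ :=
  if x < 0 then i else if 0 < x then 2 * n - 1 - i else 2 * n

lemma negDist_le_of_adjacent (x : ℝ) {i i' : ℕ} (h : i' ≤ i + 1) (h' : i ≤ i' + 1)
    (hi' : i' < n) : negDist n x i' ≤ negDist n x i + 1 := by
  unfold negDist
  split_ifs <;> omega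

lemma negDist_neg_le (x : ℝ) : negDist n x (n - 1) ≤ negDist n (-x) (n - 1) + 1 := by
  unfold negDist
  split_ifs <;> first | omega | linarith

lemma exists_negDist_le_sC {m : ℕ} (hm : 1 ≤ m) (hmn : m ≤ n) (v : EuclideanSpace ℝ (Fin n))
    (i : Fin n) : ∃ i' : Fin n, negDist n (v i') i' ≤ negDist n (sC n m v i) i + 1 := by
  rcases hmn.lt_or_eq with hmn | rfl
  · rw [sC_apply_of_lt hm hmn]
    refine ⟨_, negDist_le_of_adjacent _ ?_ ?_ (Fin.is_lt _)⟩ <;>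
      · simp only [Equiv.swap_apply_def]
        split_ifs <;> simp only [Fin.ext_iff] at * <;> omega
  · refine ⟨i, ?_⟩
    rw [sC_self_apply]
    split_ifs with hi
    · have h := negDist_neg_le (n := m) (v i)
      rwa [show m - 1 = (i : ℕ) by omega] at h
    · exact Nat.le_succ _

lemma le_negDist_compC (l : List ℕ) (hl : ∀ m ∈ l, 1 ≤ m ∧ m ≤ n) (k : ℕ)
    (v : EuclideanSpace ℝ (Fin n)) (hv : ∀ i, k + l.length ≤ negDist n (v i) i) (i : Fin n) :
    k ≤ negDist n (compC n l v i) i := by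
  induction l generalizing k i with
  | nil => simpa [compC_nil] using hv i
  | cons m l ih =>
    obtain ⟨hm, hmn⟩ := hl m List.mem_cons_self
    obtain ⟨i', hi'⟩ := exists_negDist_le_sC hm hmn (compC n l v) i
    have := ih (fun m' h => hl m' (List.mem_cons_of_mem _ h)) (k + 1)
      (fun i => by have := hv i; simp only [List.length_cons] at this; omega) i'
    rw [compC_cons]
    omega

lemma two_mul_sub_le_negDist_wtC (j : ℕ) (i : Fin n) : 2 * n - j ≤ negDist n (wtC n j i) i := by
  have := i.is_lt
  simp only [wtC, PiLp.toLp_apply, negDist]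
  split_ifs <;> first | omega | norm_num at *

lemma two_mul_sub_le_length (hn : 0 < n) {j : ℕ} (l : List ℕ) (hl : ∀ m ∈ l, 1 ≤ m ∧ m ≤ n)
    (hneg : ⟪compC n l (wtC n j), wtC n 1⟫ < 0) : 2 * n - j ≤ l.length := by
  by_contra! hlt
  have hdist := le_negDist_compC l hl 1 (wtC n j)
    (fun i => (two_mul_sub_le_negDist_wtC j i).trans' (by omega)) ⟨0, hn⟩
  rw [inner_wtC_one hn] at hneg
  simp [negDist, hneg] at hdist

end LowerBound

section UpperBound

variable {n : ℕ}

lemma compC_map_succ_range_apply_zero {k : ℕ} (hk : k < n) (v : EuclideanSpace ℝ (Fin n)) :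
    compC n ((List.range k).map (· + 1)) v ⟨0, by omega⟩ = v ⟨k, hk⟩ := by
  induction k generalizing v with
  | zero => rfl
  | succ k ih =>
    rw [List.range_succ, List.map_append, compC_append, ih (by omega), List.map_singleton,
      compC_cons, compC_nil, sC_apply_of_lt (by omega) hk]
    simp

lemma compC_map_succ_range_self_apply_zero (hn : 0 < n) (v : EuclideanSpace ℝ (Fin n)) :
    compC n ((List.range n).map (· + 1)) v ⟨0, hn⟩ = -v ⟨n - 1, by omega⟩ := by
  obtain ⟨k, rfl⟩ : ∃ k, n = k + 1 := ⟨n - 1, by omega⟩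
  rw [List.range_succ, List.map_append, compC_append,
    compC_map_succ_range_apply_zero (lt_add_one k), List.map_singleton, compC_cons, compC_nil,
    sC_self_apply, if_pos rfl]
  rfl

lemma compC_map_sub_range_apply {a k : ℕ} (hka : k ≤ a) (ha : a < n)
    (v : EuclideanSpace ℝ (Fin n)) :
    compC n ((List.range k).map (a - ·)) v ⟨a, ha⟩ = v ⟨a - k, by omega⟩ := by
  induction k generalizing v with
  | zero => rfl
  | succ k ih =>
    rw [List.range_succ, List.map_append, compC_append, ih (by omega), List.map_singleton,
      compC_cons, compC_nil, sC_apply_of_lt (by omega) (by omega)]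
    simp only [Equiv.swap_apply_right, Nat.sub_add_eq]

def reflWord (n j : ℕ) : List ℕ :=
  (List.range n).map (· + 1) ++ (List.range (n - j)).map (n - 1 - ·)

lemma length_reflWord {j : ℕ} (hjn : j ≤ n) : (reflWord n j).length = 2 * n - j := by
  simp [reflWord]
  omega

lemma mem_reflWord {j : ℕ} (hj : 1 ≤ j) : ∀ m ∈ reflWord n j, 1 ≤ m ∧ m ≤ n := by
  simp only [reflWord, List.mem_append, List.mem_map, List.mem_range]
  rintro m (⟨t, ht, rfl⟩ | ⟨t, ht, rfl⟩) <;> omega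

lemma inner_compC_reflWord_neg {j : ℕ} (hj : 1 ≤ j) (hjn : j ≤ n) :
    ⟪compC n (reflWord n j) (wtC n j), wtC n 1⟫ < 0 := by
  rw [inner_wtC_one (by omega), reflWord, compC_append, compC_map_succ_range_self_apply_zero,
    compC_map_sub_range_apply (by omega) (by omega)]
  simp [wtC, show n - 1 - (n - j) < j by omega]

end UpperBound

theorem statement8 (n : ℕ) (hn : 2 ≤ n) :
    (∀ j, 1 ≤ j → j ≤ n →
      IsLeast {k : ℕ | ∃ l : List ℕ, (∀ m ∈ l, 1 ≤ m ∧ m ≤ n) ∧ l.length = k ∧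
          ⟪compC n l (wtC n j), wtC n 1⟫ < 0} (2 * n - j)) ∧
    (∀ j, 1 ≤ j → j ≤ n → j ≠ n → ∀ l : List ℕ, (∀ m ∈ l, 1 ≤ m ∧ m ≤ n) →
        ⟪compC n l (wtC n j), wtC n 1⟫ < 0 → n < l.length) ∧
    ⟪compC n ((List.range n).map (· + 1)) (wtC n n), wtC n 1⟫ < 0 := by
  have hn₀ : 0 < n := by omega
  refine ⟨fun j hj hjn => ⟨?_, ?_⟩, ?_, ?_⟩
  · exact ⟨reflWord n j, mem_reflWord hj, length_reflWord hjn, inner_compC_reflWord_neg hj hjn⟩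
  · rintro k ⟨l, hl, rfl, hneg⟩
    exact two_mul_sub_le_length hn₀ l hl hneg
  · intro j _ hjn hjne l hl hneg
    have := two_mul_sub_le_length hn₀ l hl hneg
    omega
  · simpa [reflWord] using inner_compC_reflWord_neg (n := n) (j := n) hn₀ le_rfl
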